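/- The copresheaf 2-monad 𝔓† = (P†,s†,y†) on Q-Cat distributes strictly over the presheaf 2-monad 𝔓 by the distributive law λ† given by λ†_X = ←(((y_X)_†)_*) = ((y_X)_†)^!·y_{P†PX}:P†PX→PP†X; that is, this λ† satisfies all five distributive-law laws (a)–(e) with equality. -/

import Mathlib

/-!
Common framework: quantaloids, `Q`-categories, `Q`-functors, `Q`-distributors,
(co)presheaf constructions, 2-monads on `Q`-Cat, lax distributive laws over the
presheaf 2-monad, and lax extensions to `Q`-Dist.
-/

set_option autoImplicit false

universe u

namespace QT

/-- A (small) quantaloid: a category enriched in complete lattices, with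
composition preserving suprema in each variable. -/
structure Quantaloid : Type (u + 1) where
  Obj : Type u
  Hom : Obj → Obj → Type u
  lat : ∀ a b, CompleteLattice (Hom a b)
  comp : ∀ {a b c}, Hom b c → Hom a b → Hom a c
  idm : ∀ a, Hom a a
  comp_assoc : ∀ {a b c d} (w : Hom c d) (v : Hom b c) (u : Hom a b),
    comp (comp w v) u = comp w (comp v u)
  comp_idm : ∀ {a b} (u : Hom a b), comp u (idm a) = u
  idm_comp : ∀ {a b} (u : Hom a b), comp (idm b) u = u
  comp_sSup : ∀ {a b c} (v : Hom b c) (S : Set (Hom a b)),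
    comp v (sSup S) = ⨆ u ∈ S, comp v u
  sSup_comp : ∀ {a b c} (S : Set (Hom b c)) (u : Hom a b),
    comp (sSup S) u = ⨆ v ∈ S, comp v u

attribute [instance] Quantaloid.lat

namespace Quantaloid

variable {Q : Quantaloid.{u}}

theorem comp_iSup {a b c : Q.Obj} (v : Q.Hom b c) {ι : Sort*} (f : ι → Q.Hom a b) :
    Q.comp v (⨆ i, f i) = ⨆ i, Q.comp v (f i) := by
  rw [iSup, Q.comp_sSup, iSup_range]

theorem iSup_comp {a b c : Q.Obj} {ι : Sort*} (f : ι → Q.Hom b c) (u : Q.Hom a b) :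
    Q.comp (⨆ i, f i) u = ⨆ i, Q.comp (f i) u := by
  rw [iSup, Q.sSup_comp, iSup_range]

theorem comp_le_comp {a b c : Q.Obj} {v v' : Q.Hom b c} {u u' : Q.Hom a b}
    (hv : v ≤ v') (hu : u ≤ u') : Q.comp v u ≤ Q.comp v' u' := by
  have h1 : Q.comp v' u ≤ Q.comp v' u' := by
    have h := Q.comp_sSup v' {u, u'}
    rw [sSup_pair, sup_eq_right.mpr hu] at h
    rw [h]
    exact le_biSup (fun x => Q.comp v' x) (Set.mem_insert _ _)
  have h2 : Q.comp v u ≤ Q.comp v' u := by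
    have h := Q.sSup_comp {v, v'} u
    rw [sSup_pair, sup_eq_right.mpr hv] at h
    rw [h]
    exact le_biSup (fun x => Q.comp x u) (Set.mem_insert _ _)
  exact le_trans h2 h1

/-- Internal hom `w ↙ u` (right adjoint to `- ∘ u`). -/
def lda {a b c : Q.Obj} (w : Q.Hom a c) (u : Q.Hom a b) : Q.Hom b c :=
  sSup {v | Q.comp v u ≤ w}

/-- Internal hom `v ↘ w` (right adjoint to `v ∘ -`). -/
def rda {a b c : Q.Obj} (v : Q.Hom b c) (w : Q.Hom a c) : Q.Hom a b :=
  sSup {u | Q.comp v u ≤ w}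

theorem le_lda {a b c : Q.Obj} {v : Q.Hom b c} {u : Q.Hom a b} {w : Q.Hom a c} :
    Q.comp v u ≤ w ↔ v ≤ lda w u := by
  constructor
  · exact fun h => le_sSup h
  · intro h
    calc Q.comp v u ≤ Q.comp (lda w u) u := comp_le_comp h le_rfl
      _ ≤ w := by
          rw [lda, Q.sSup_comp]; exact iSup₂_le fun v' hv' => hv'

theorem le_rda {a b c : Q.Obj} {v : Q.Hom b c} {u : Q.Hom a b} {w : Q.Hom a c} :
    Q.comp v u ≤ w ↔ u ≤ rda v w := by
  constructor
  · exact fun h => le_sSup h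
  · intro h
    calc Q.comp v u ≤ Q.comp v (rda v w) := comp_le_comp le_rfl h
      _ ≤ w := by
          rw [rda, Q.comp_sSup]; exact iSup₂_le fun u' hu' => hu'

end Quantaloid

variable {Q : Quantaloid.{u}}

/-- `Q`-relations between families of sets indexed by the objects of `Q`
(i.e. sets over `ob Q`, presented fibrewise). -/
abbrev QRel (Q : Quantaloid.{u}) (X Y : Q.Obj → Type u) : Type u :=
  ∀ p q, X p → Y q → Q.Hom p q

/-- Composition of `Q`-relations. -/
def QRel.comp {X Y Z : Q.Obj → Type u} (ψ : QRel Q Y Z) (φ : QRel Q X Y) : QRel Q X Z :=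
  fun p r x z => ⨆ q, ⨆ y : Y q, Q.comp (ψ q r y z) (φ p q x y)

theorem QRel.comp_mono {X Y Z : Q.Obj → Type u} {ψ ψ' : QRel Q Y Z} {φ φ' : QRel Q X Y}
    (h1 : ψ ≤ ψ') (h2 : φ ≤ φ') : QRel.comp ψ φ ≤ QRel.comp ψ' φ' := by
  intro p r x z
  exact iSup_mono fun q => iSup_mono fun y =>
    Quantaloid.comp_le_comp (h1 q r y z) (h2 p q x y)

theorem QRel.comp_assoc {W X Y Z : Q.Obj → Type u}
    (χ : QRel Q Y Z) (ψ : QRel Q X Y) (φ : QRel Q W X) :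
    QRel.comp (QRel.comp χ ψ) φ = QRel.comp χ (QRel.comp ψ φ) := by
  funext p s w z
  simp only [QRel.comp, Quantaloid.iSup_comp, Quantaloid.comp_iSup]
  apply le_antisymm
  · exact iSup₂_le fun q x => iSup₂_le fun r y =>
      le_iSup_of_le r (le_iSup_of_le y (le_iSup_of_le q (le_iSup_of_le x
        (Q.comp_assoc _ _ _).le)))
  · exact iSup₂_le fun r y => iSup₂_le fun q x =>
      le_iSup_of_le q (le_iSup_of_le x (le_iSup_of_le r (le_iSup_of_le y
        (Q.comp_assoc _ _ _).ge)))

/-- A (small) `Q`-category. -/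
structure QCat (Q : Quantaloid.{u}) : Type (u + 1) where
  el : Q.Obj → Type u
  hom : QRel Q el el
  refl : ∀ p (x : el p), Q.idm p ≤ hom p p x x
  trans : QRel.comp hom hom ≤ hom

/-- Pointwise transitivity in a `Q`-category. -/
theorem QCat.hom_comp_le (X : QCat Q) {p q r : Q.Obj}
    (x : X.el p) (y : X.el q) (z : X.el r) :
    Q.comp (X.hom q r y z) (X.hom p q x y) ≤ X.hom p r x z :=
  le_trans
    (le_iSup_of_le q (le_iSup (fun y' : X.el q => Q.comp (X.hom q r y' z) (X.hom p q x y')) y))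
    (X.trans p r x z)

/-- Any `Q`-relation into a `Q`-category embeds into its post-composite with the hom. -/
theorem QRel.le_hom_comp {W : Q.Obj → Type u} {Z : QCat Q} (ρ : QRel Q W Z.el) :
    ρ ≤ QRel.comp Z.hom ρ := by
  intro p q x z
  calc ρ p q x z = Q.comp (Q.idm q) (ρ p q x z) := (Q.idm_comp _).symm
    _ ≤ Q.comp (Z.hom q q z z) (ρ p q x z) := Quantaloid.comp_le_comp (Z.refl q z) le_rfl
    _ ≤ _ := le_iSup_of_le q
        (le_iSup (fun z' : Z.el q => Q.comp (Z.hom q q z' z) (ρ p q x z')) z)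

/-- Any `Q`-relation out of a `Q`-category embeds into its pre-composite with the hom. -/
theorem QRel.le_comp_hom {X : QCat Q} {W : Q.Obj → Type u} (ρ : QRel Q X.el W) :
    ρ ≤ QRel.comp ρ X.hom := by
  intro p q x z
  calc ρ p q x z = Q.comp (ρ p q x z) (Q.idm p) := (Q.comp_idm _).symm
    _ ≤ Q.comp (ρ p q x z) (X.hom p p x x) := Quantaloid.comp_le_comp le_rfl (X.refl p x)
    _ ≤ _ := le_iSup_of_le p
        (le_iSup (fun x' : X.el p => Q.comp (ρ p q x' z) (X.hom p p x x')) x)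

/-- A `Q`-functor. -/
structure QFun (X Y : QCat Q) : Type u where
  app : ∀ p, X.el p → Y.el p
  mono : ∀ p q (x : X.el p) (x' : X.el q),
    X.hom p q x x' ≤ Y.hom p q (app p x) (app q x')

def QFun.id (X : QCat Q) : QFun X X :=
  ⟨fun _ x => x, fun _ _ _ _ => le_rfl⟩

def QFun.comp {X Y Z : QCat Q} (g : QFun Y Z) (f : QFun X Y) : QFun X Z :=
  ⟨fun p x => g.app p (f.app p x),
   fun p q x x' => le_trans (f.mono p q x x') (g.mono p q (f.app p x) (f.app q x'))⟩

/-- The (pointwise) order of `Q`-functors. -/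
instance {X Y : QCat Q} : Preorder (QFun X Y) where
  le f g := ∀ p (x : X.el p), Q.idm p ≤ Y.hom p p (f.app p x) (g.app p x)
  le_refl f p x := Y.refl p (f.app p x)
  le_trans f g h h1 h2 := by
    intro p x
    calc Q.idm p = Q.comp (Q.idm p) (Q.idm p) := (Q.comp_idm _).symm
      _ ≤ Q.comp (Y.hom p p (g.app p x) (h.app p x)) (Y.hom p p (f.app p x) (g.app p x)) :=
          Quantaloid.comp_le_comp (h2 p x) (h1 p x)
      _ ≤ Y.hom p p (f.app p x) (h.app p x) := Y.hom_comp_le _ _ _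

/-- A `Q`-distributor between `Q`-categories. -/
structure QDist (X Y : QCat Q) : Type u where
  rel : QRel Q X.el Y.el
  compat : QRel.comp Y.hom (QRel.comp rel X.hom) ≤ rel

instance {X Y : QCat Q} : PartialOrder (QDist X Y) where
  le φ ψ := φ.rel ≤ ψ.rel
  le_refl φ := le_refl φ.rel
  le_trans _ _ _ h h' := by
    intro p q x y
    exact le_trans (h p q x y) (h' p q x y)
  le_antisymm φ ψ h h' := by
    have hr : φ.rel = ψ.rel := le_antisymm h h'
    cases φ; cases ψ; cases hr; rfl

theorem QDist.hom_comp_le {X Y : QCat Q} (φ : QDist X Y) :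
    QRel.comp Y.hom φ.rel ≤ φ.rel :=
  le_trans (QRel.comp_mono le_rfl (QRel.le_comp_hom φ.rel)) φ.compat

theorem QDist.comp_hom_le {X Y : QCat Q} (φ : QDist X Y) :
    QRel.comp φ.rel X.hom ≤ φ.rel :=
  le_trans (QRel.le_hom_comp _) φ.compat

theorem QDist.rel_comp_hom {X Y : QCat Q} (φ : QDist X Y) {p q r : Q.Obj}
    (x : X.el p) (x' : X.el q) (y : Y.el r) :
    Q.comp (φ.rel q r x' y) (X.hom p q x x') ≤ φ.rel p r x y :=
  le_trans
    (le_iSup_of_le q (le_iSup (fun x'' : X.el q => Q.comp (φ.rel q r x'' y) (X.hom p q x x'')) x'))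
    (φ.comp_hom_le p r x y)

theorem QDist.hom_comp_rel {X Y : QCat Q} (φ : QDist X Y) {p q r : Q.Obj}
    (x : X.el p) (y : Y.el q) (y' : Y.el r) :
    Q.comp (Y.hom q r y y') (φ.rel p q x y) ≤ φ.rel p r x y' :=
  le_trans
    (le_iSup_of_le q (le_iSup (fun y'' : Y.el q => Q.comp (Y.hom q r y'' y') (φ.rel p q x y'')) y))
    (φ.hom_comp_le p r x y')

/-- Composition of `Q`-distributors. -/
def QDist.comp {X Y Z : QCat Q} (ψ : QDist Y Z) (φ : QDist X Y) : QDist X Z :=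
  ⟨QRel.comp ψ.rel φ.rel, by
    calc QRel.comp Z.hom (QRel.comp (QRel.comp ψ.rel φ.rel) X.hom)
        = QRel.comp (QRel.comp Z.hom ψ.rel) (QRel.comp φ.rel X.hom) := by
          rw [QRel.comp_assoc, QRel.comp_assoc]
      _ ≤ QRel.comp ψ.rel φ.rel :=
          QRel.comp_mono ψ.hom_comp_le φ.comp_hom_le⟩

/-- The identity distributor `1_X^*` on a `Q`-category. -/
def QCat.homDist (X : QCat Q) : QDist X X :=
  ⟨X.hom, le_trans (QRel.comp_mono le_rfl X.trans) X.trans⟩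

/-- The graph `f_*` of a `Q`-functor. -/
def QFun.graph {X Y : QCat Q} (f : QFun X Y) : QDist X Y :=
  ⟨fun p q x y => Y.hom p q (f.app p x) y, by
    intro p q x y
    simp only [QRel.comp, Quantaloid.comp_iSup, Quantaloid.iSup_comp]
    refine iSup₂_le fun q' y' => iSup₂_le fun p' x' => ?_
    calc Q.comp (Y.hom q' q y' y) (Q.comp (Y.hom p' q' (f.app p' x') y') (X.hom p p' x x'))
        ≤ Q.comp (Y.hom q' q y' y)
            (Q.comp (Y.hom p' q' (f.app p' x') y') (Y.hom p p' (f.app p x) (f.app p' x'))) :=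
          Quantaloid.comp_le_comp le_rfl
            (Quantaloid.comp_le_comp le_rfl (f.mono p p' x x'))
      _ ≤ Q.comp (Y.hom q' q y' y) (Y.hom p q' (f.app p x) y') :=
          Quantaloid.comp_le_comp le_rfl (Y.hom_comp_le _ _ _)
      _ ≤ Y.hom p q (f.app p x) y := Y.hom_comp_le _ _ _⟩

/-- The cograph `f^*` of a `Q`-functor. -/
def QFun.cograph {X Y : QCat Q} (f : QFun X Y) : QDist Y X :=
  ⟨fun p q y x => Y.hom p q y (f.app q x), by
    intro p q y x
    simp only [QRel.comp, Quantaloid.comp_iSup, Quantaloid.iSup_comp]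
    refine iSup₂_le fun q' x' => iSup₂_le fun p' y' => ?_
    calc Q.comp (X.hom q' q x' x) (Q.comp (Y.hom p' q' y' (f.app q' x')) (Y.hom p p' y y'))
        ≤ Q.comp (Y.hom q' q (f.app q' x') (f.app q x))
            (Q.comp (Y.hom p' q' y' (f.app q' x')) (Y.hom p p' y y')) :=
          Quantaloid.comp_le_comp (f.mono q' q x' x) le_rfl
      _ ≤ Q.comp (Y.hom q' q (f.app q' x') (f.app q x)) (Y.hom p q' y (f.app q' x')) :=
          Quantaloid.comp_le_comp le_rfl (Y.hom_comp_le _ _ _)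
      _ ≤ Y.hom p q y (f.app q x) := Y.hom_comp_le _ _ _⟩

/-- The presheaf `Q`-category `P X`. -/
def QCat.P (X : QCat Q) : QCat Q where
  el s := { σ : ∀ p, X.el p → Q.Hom p s //
    ∀ p q (x : X.el p) (x' : X.el q), Q.comp (σ q x') (X.hom p q x x') ≤ σ p x }
  hom s s' σ σ' := ⨅ p, ⨅ x : X.el p, Quantaloid.lda (σ'.1 p x) (σ.1 p x)
  refl := by
    intro s σ
    refine le_iInf fun p => le_iInf fun x => Quantaloid.le_lda.mp ?_
    rw [Q.idm_comp]
  trans := by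
    intro s s'' σ σ''
    refine iSup₂_le fun s' σ' => ?_
    refine le_iInf fun p => le_iInf fun x => Quantaloid.le_lda.mp ?_
    rw [Q.comp_assoc]
    have h1 : Q.comp (⨅ p', ⨅ x' : X.el p', Quantaloid.lda (σ'.1 p' x') (σ.1 p' x'))
        (σ.1 p x) ≤ σ'.1 p x :=
      Quantaloid.le_lda.mpr (le_trans (iInf_le _ p) (iInf_le _ x))
    have h2 : Q.comp (⨅ p', ⨅ x' : X.el p', Quantaloid.lda (σ''.1 p' x') (σ'.1 p' x'))
        (σ'.1 p x) ≤ σ''.1 p x :=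
      Quantaloid.le_lda.mpr (le_trans (iInf_le _ p) (iInf_le _ x))
    exact le_trans (Quantaloid.comp_le_comp le_rfl h1) h2

/-- The copresheaf `Q`-category `P† X`. -/
def QCat.Pd (X : QCat Q) : QCat Q where
  el s := { τ : ∀ q, X.el q → Q.Hom s q //
    ∀ p q (x : X.el p) (x' : X.el q), Q.comp (X.hom p q x x') (τ p x) ≤ τ q x' }
  hom s s' τ τ' := ⨅ q, ⨅ x : X.el q, Quantaloid.rda (τ'.1 q x) (τ.1 q x)
  refl := by
    intro s τ
    refine le_iInf fun q => le_iInf fun x => Quantaloid.le_rda.mp ?_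
    rw [Q.comp_idm]
  trans := by
    intro s s'' τ τ''
    refine iSup₂_le fun s' τ' => ?_
    refine le_iInf fun q => le_iInf fun x => Quantaloid.le_rda.mp ?_
    rw [← Q.comp_assoc]
    have h1 : Q.comp (τ''.1 q x)
        (⨅ q', ⨅ x' : X.el q', Quantaloid.rda (τ''.1 q' x') (τ'.1 q' x')) ≤ τ'.1 q x :=
      Quantaloid.le_rda.mpr (le_trans (iInf_le _ q) (iInf_le _ x))
    have h2 : Q.comp (τ'.1 q x)
        (⨅ q', ⨅ x' : X.el q', Quantaloid.rda (τ'.1 q' x') (τ.1 q' x')) ≤ τ.1 q x :=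
      Quantaloid.le_rda.mpr (le_trans (iInf_le _ q) (iInf_le _ x))
    exact le_trans (Quantaloid.comp_le_comp h1 le_rfl) h2

/-- The Yoneda embedding `y_X : X → P X`. -/
def QCat.y (X : QCat Q) : QFun X X.P where
  app p x := ⟨fun q x' => X.hom q p x' x,
    fun p' q' x1 x2 => X.hom_comp_le x1 x2 x⟩
  mono := by
    intro p q x x'
    refine le_iInf fun r => le_iInf fun x'' => Quantaloid.le_lda.mp ?_
    exact X.hom_comp_le x'' x x'

/-- The co-Yoneda embedding `y†_X : X → P† X`. -/
def QCat.yd (X : QCat Q) : QFun X X.Pd where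
  app p x := ⟨fun q x' => X.hom p q x x',
    fun p' q' x1 x2 => X.hom_comp_le x x1 x2⟩
  mono := by
    intro p q x x'
    refine le_iInf fun r => le_iInf fun x'' => Quantaloid.le_rda.mp ?_
    exact X.hom_comp_le x x' x''

/-- `φ^→ : P Y → P X`, `τ ↦ τ ∘ φ`. -/
def QDist.fwd {X Y : QCat Q} (φ : QDist X Y) : QFun Y.P X.P where
  app s τ := ⟨fun p x => ⨆ q, ⨆ y : Y.el q, Q.comp (τ.1 q y) (φ.rel p q x y), by
    intro p q x x'
    rw [Quantaloid.iSup_comp]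
    refine iSup_le fun r => ?_
    rw [Quantaloid.iSup_comp]
    refine iSup_le fun y => ?_
    rw [Q.comp_assoc]
    exact le_iSup_of_le r (le_iSup_of_le y
      (Quantaloid.comp_le_comp le_rfl (φ.rel_comp_hom x x' y)))⟩
  mono := by
    intro s s' τ τ'
    refine le_iInf fun p => le_iInf fun x => Quantaloid.le_lda.mp ?_
    rw [Quantaloid.comp_iSup]
    refine iSup_le fun r => ?_
    rw [Quantaloid.comp_iSup]
    refine iSup_le fun y => ?_
    rw [← Q.comp_assoc]
    have h : Q.comp (Y.P.hom s s' τ τ') (τ.1 r y) ≤ τ'.1 r y :=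
      Quantaloid.le_lda.mpr (le_trans (iInf_le _ r) (iInf_le _ y))
    exact le_iSup_of_le r (le_iSup_of_le y (Quantaloid.comp_le_comp h le_rfl))

/-- `φ^↞ : P† X → P† Y`, `σ ↦ φ ∘ σ`. -/
def QDist.bwd {X Y : QCat Q} (φ : QDist X Y) : QFun X.Pd Y.Pd where
  app s σ := ⟨fun q y => ⨆ p, ⨆ x : X.el p, Q.comp (φ.rel p q x y) (σ.1 p x), by
    intro p q y y'
    rw [Quantaloid.comp_iSup]
    refine iSup_le fun r => ?_
    rw [Quantaloid.comp_iSup]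
    refine iSup_le fun x => ?_
    rw [← Q.comp_assoc]
    exact le_iSup_of_le r (le_iSup_of_le x
      (Quantaloid.comp_le_comp (φ.hom_comp_rel x y y') le_rfl))⟩
  mono := by
    intro s s' σ σ'
    refine le_iInf fun q => le_iInf fun y => Quantaloid.le_rda.mp ?_
    rw [Quantaloid.iSup_comp]
    refine iSup_le fun r => ?_
    rw [Quantaloid.iSup_comp]
    refine iSup_le fun x => ?_
    rw [Q.comp_assoc]
    have h : Q.comp (σ'.1 r x) (X.Pd.hom s s' σ σ') ≤ σ.1 r x :=
      Quantaloid.le_rda.mpr (le_trans (iInf_le _ r) (iInf_le _ x))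
    exact le_iSup_of_le r (le_iSup_of_le x (Quantaloid.comp_le_comp le_rfl h))

/-- `φ_→ : P X → P Y`, `σ ↦ σ ↙ φ`. -/
def QDist.fwdr {X Y : QCat Q} (φ : QDist X Y) : QFun X.P Y.P where
  app s σ := ⟨fun q y => ⨅ p, ⨅ x : X.el p, Quantaloid.lda (σ.1 p x) (φ.rel p q x y), by
    intro q q' y y'
    refine le_iInf fun p => le_iInf fun x => Quantaloid.le_lda.mp ?_
    rw [Q.comp_assoc]
    have h1 : Q.comp (Y.hom q q' y y') (φ.rel p q x y) ≤ φ.rel p q' x y' :=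
      φ.hom_comp_rel x y y'
    have h2 : Q.comp ((⨅ p', ⨅ x' : X.el p',
        Quantaloid.lda (σ.1 p' x') (φ.rel p' q' x' y')) : Q.Hom q' s) (φ.rel p q' x y')
        ≤ σ.1 p x :=
      Quantaloid.le_lda.mpr (le_trans (iInf_le _ p) (iInf_le _ x))
    exact le_trans (Quantaloid.comp_le_comp le_rfl h1) h2⟩
  mono := by
    intro s s' σ σ'
    refine le_iInf fun q => le_iInf fun y => Quantaloid.le_lda.mp ?_
    refine le_iInf fun p => le_iInf fun x => Quantaloid.le_lda.mp ?_
    rw [Q.comp_assoc]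
    have h1 : Q.comp ((⨅ p', ⨅ x' : X.el p',
        Quantaloid.lda (σ.1 p' x') (φ.rel p' q x' y)) : Q.Hom q s) (φ.rel p q x y)
        ≤ σ.1 p x :=
      Quantaloid.le_lda.mpr (le_trans (iInf_le _ p) (iInf_le _ x))
    have h2 : Q.comp (X.P.hom s s' σ σ') (σ.1 p x) ≤ σ'.1 p x :=
      Quantaloid.le_lda.mpr (le_trans (iInf_le _ p) (iInf_le _ x))
    exact le_trans (Quantaloid.comp_le_comp le_rfl h1) h2

/-- Isbell `φ↑ : P X → P† Y`, `σ ↦ φ ↙ σ`. -/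
def QDist.up {X Y : QCat Q} (φ : QDist X Y) : QFun X.P Y.Pd where
  app s σ := ⟨fun q y => ⨅ p, ⨅ x : X.el p, Quantaloid.lda (φ.rel p q x y) (σ.1 p x), by
    intro q q' y y'
    refine le_iInf fun p => le_iInf fun x => Quantaloid.le_lda.mp ?_
    rw [Q.comp_assoc]
    have h1 : Q.comp ((⨅ p', ⨅ x' : X.el p',
        Quantaloid.lda (φ.rel p' q x' y) (σ.1 p' x')) : Q.Hom s q) (σ.1 p x)
        ≤ φ.rel p q x y :=
      Quantaloid.le_lda.mpr (le_trans (iInf_le _ p) (iInf_le _ x))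
    exact le_trans (Quantaloid.comp_le_comp le_rfl h1) (φ.hom_comp_rel x y y')⟩
  mono := by
    intro s s' σ σ'
    refine le_iInf fun q => le_iInf fun y => Quantaloid.le_rda.mp ?_
    refine le_iInf fun p => le_iInf fun x => Quantaloid.le_lda.mp ?_
    rw [Q.comp_assoc]
    have h1 : Q.comp (X.P.hom s s' σ σ') (σ.1 p x) ≤ σ'.1 p x :=
      Quantaloid.le_lda.mpr (le_trans (iInf_le _ p) (iInf_le _ x))
    have h2 : Q.comp ((⨅ p', ⨅ x' : X.el p',
        Quantaloid.lda (φ.rel p' q x' y) (σ'.1 p' x')) : Q.Hom s' q) (σ'.1 p x)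
        ≤ φ.rel p q x y :=
      Quantaloid.le_lda.mpr (le_trans (iInf_le _ p) (iInf_le _ x))
    exact le_trans (Quantaloid.comp_le_comp le_rfl h1) h2

/-- Isbell `φ↓ : P† Y → P X`, `τ ↦ τ ↘ φ`. -/
def QDist.down {X Y : QCat Q} (φ : QDist X Y) : QFun Y.Pd X.P where
  app s τ := ⟨fun p x => ⨅ q, ⨅ y : Y.el q, Quantaloid.rda (τ.1 q y) (φ.rel p q x y), by
    intro p p' x x'
    refine le_iInf fun q => le_iInf fun y => Quantaloid.le_rda.mp ?_
    rw [← Q.comp_assoc]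
    have h1 : Q.comp (τ.1 q y) ((⨅ q', ⨅ y' : Y.el q',
        Quantaloid.rda (τ.1 q' y') (φ.rel p' q' x' y')) : Q.Hom p' s)
        ≤ φ.rel p' q x' y :=
      Quantaloid.le_rda.mpr (le_trans (iInf_le _ q) (iInf_le _ y))
    exact le_trans (Quantaloid.comp_le_comp h1 le_rfl) (φ.rel_comp_hom x x' y)⟩
  mono := by
    intro s s' τ τ'
    refine le_iInf fun p => le_iInf fun x => Quantaloid.le_lda.mp ?_
    refine le_iInf fun q => le_iInf fun y => Quantaloid.le_rda.mp ?_
    rw [← Q.comp_assoc]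
    have h1 : Q.comp (τ'.1 q y) (Y.Pd.hom s s' τ τ') ≤ τ.1 q y :=
      Quantaloid.le_rda.mpr (le_trans (iInf_le _ q) (iInf_le _ y))
    have h2 : Q.comp (τ.1 q y) ((⨅ q', ⨅ y' : Y.el q',
        Quantaloid.rda (τ.1 q' y') (φ.rel p q' x y')) : Q.Hom p s)
        ≤ φ.rel p q x y :=
      Quantaloid.le_rda.mpr (le_trans (iInf_le _ q) (iInf_le _ y))
    exact le_trans (Quantaloid.comp_le_comp h1 le_rfl) h2

/-- The transpose `←φ : Y → P X` of a distributor `φ : X ⇸ Y`. -/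
def QDist.transpose {X Y : QCat Q} (φ : QDist X Y) : QFun Y X.P where
  app q y := ⟨fun p x => φ.rel p q x y,
    fun p q' x x' => φ.rel_comp_hom x x' y⟩
  mono := by
    intro q q' y y'
    refine le_iInf fun p => le_iInf fun x => Quantaloid.le_lda.mp ?_
    exact φ.hom_comp_rel x y y'

/-- The inverse of transposition. -/
def QFun.untranspose {X Y : QCat Q} (g : QFun Y X.P) : QDist X Y :=
  ⟨fun p q x y => (g.app q y).1 p x, by
    intro p q x y
    simp only [QRel.comp, Quantaloid.comp_iSup, Quantaloid.iSup_comp]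
    refine iSup₂_le fun q' y' => iSup₂_le fun p' x' => ?_
    have h1 : Q.comp ((g.app q' y').1 p' x') (X.hom p p' x x') ≤ (g.app q' y').1 p x :=
      (g.app q' y').2 p p' x x'
    have h2 : Q.comp (Y.hom q' q y' y) ((g.app q' y').1 p x) ≤ (g.app q y).1 p x :=
      Quantaloid.le_lda.mpr
        (le_trans (g.mono q' q y' y) (le_trans (iInf_le _ p) (iInf_le _ x)))
    exact le_trans (Quantaloid.comp_le_comp le_rfl h1) h2⟩

/-- `f_! := (f^*)^→ : P X → P Y`. -/
def pshf {X Y : QCat Q} (f : QFun X Y) : QFun X.P Y.P := f.cograph.fwd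

/-- `f^! := (f_*)^→ : P Y → P X`. -/
def pshb {X Y : QCat Q} (f : QFun X Y) : QFun Y.P X.P := f.graph.fwd

/-- `f_† := (f_*)^↞ : P† X → P† Y`. -/
def cpsf {X Y : QCat Q} (f : QFun X Y) : QFun X.Pd Y.Pd := f.graph.bwd

/-- `f^† := (f^*)^↞ : P† Y → P† X`. -/
def cpsb {X Y : QCat Q} (f : QFun X Y) : QFun Y.Pd X.Pd := f.cograph.bwd

/-- `sup_{P X} = y_X^! : P P X → P X`: the multiplication of the presheaf 2-monad. -/
def supP (X : QCat Q) : QFun X.P.P X.P := pshb X.y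

/-- `inf_{P† X} = (y†_X)^† : P† P† X → P† X`: the multiplication of the copresheaf
2-monad. -/
def infPd (X : QCat Q) : QFun X.Pd.Pd X.Pd := cpsb X.yd

/-- Adjunction `f ⊣ g` in `Q`-Cat. -/
def QAdj {X Y : QCat Q} (f : QFun X Y) (g : QFun Y X) : Prop :=
  QFun.id X ≤ g.comp f ∧ f.comp g ≤ QFun.id Y

/-- Fully faithful `Q`-functors. -/
def QFun.FullyFaithful {X Y : QCat Q} (f : QFun X Y) : Prop :=
  ∀ p q (x : X.el p) (x' : X.el q), X.hom p q x x' = Y.hom p q (f.app p x) (f.app q x')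

/-- A `Q`-closure operation on a `Q`-category. -/
def IsClosureOp (Z : QCat Q) (c : QFun Z Z) : Prop :=
  QFun.id Z ≤ c ∧ c.comp c = c

/-- A 2-functor on `Q`-Cat. -/
structure TwoFunctor (Q : Quantaloid.{u}) : Type (u + 1) where
  obj : QCat Q → QCat Q
  map : ∀ {X Y : QCat Q}, QFun X Y → QFun (obj X) (obj Y)
  map_id : ∀ X : QCat Q, map (QFun.id X) = QFun.id (obj X)
  map_comp : ∀ {X Y Z : QCat Q} (g : QFun Y Z) (f : QFun X Y),
    map (g.comp f) = (map g).comp (map f)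
  map_mono : ∀ {X Y : QCat Q} {f g : QFun X Y}, f ≤ g → map f ≤ map g

/-- A 2-monad on `Q`-Cat. -/
structure TwoMonad (Q : Quantaloid.{u}) extends TwoFunctor Q where
  unit : ∀ X : QCat Q, QFun X (obj X)
  mult : ∀ X : QCat Q, QFun (obj (obj X)) (obj X)
  unit_nat : ∀ {X Y : QCat Q} (f : QFun X Y), (unit Y).comp f = (map f).comp (unit X)
  mult_nat : ∀ {X Y : QCat Q} (f : QFun X Y),
    (mult Y).comp (map (map f)) = (map f).comp (mult X)
  mult_unit : ∀ X : QCat Q, (mult X).comp (unit (obj X)) = QFun.id (obj X)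
  mult_map_unit : ∀ X : QCat Q, (mult X).comp (map (unit X)) = QFun.id (obj X)
  mult_assoc : ∀ X : QCat Q, (mult X).comp (map (mult X)) = (mult X).comp (mult (obj X))

/-- The type of families `λ_X : T P X → P T X`. -/
abbrev LamFamily (T : TwoFunctor Q) : Type (u + 1) :=
  ∀ X : QCat Q, QFun (T.obj X.P) ((T.obj X).P)

/-- Lax naturality law (a): `(Tf)_! ∘ λ_X ≤ λ_Y ∘ T(f_!)`. -/
def LawA (T : TwoFunctor Q) (lam : LamFamily T) : Prop :=
  ∀ (X Y : QCat Q) (f : QFun X Y),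
    (pshf (T.map f)).comp (lam X) ≤ (lam Y).comp (T.map (pshf f))

/-- Lax `P`-unit law (b): `y_{TX} ≤ λ_X ∘ T y_X`. -/
def LawB (T : TwoFunctor Q) (lam : LamFamily T) : Prop :=
  ∀ X : QCat Q, QCat.y (T.obj X) ≤ (lam X).comp (T.map X.y)

/-- The `P`-unit law (b) holding strictly (flatness). -/
def LawBstrict (T : TwoFunctor Q) (lam : LamFamily T) : Prop :=
  ∀ X : QCat Q, (lam X).comp (T.map X.y) = QCat.y (T.obj X)

/-- Lax `P`-multiplication law (c): `s_{TX} ∘ (λ_X)_! ∘ λ_{PX} ≤ λ_X ∘ T s_X`. -/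
def LawC (T : TwoFunctor Q) (lam : LamFamily T) : Prop :=
  ∀ X : QCat Q,
    (supP (T.obj X)).comp ((pshf (lam X)).comp (lam X.P)) ≤ (lam X).comp (T.map (supP X))

/-- Lax `T`-unit law (d): `(e_X)_! ≤ λ_X ∘ e_{PX}`. -/
def LawD (M : TwoMonad Q) (lam : LamFamily M.toTwoFunctor) : Prop :=
  ∀ X : QCat Q, pshf (M.unit X) ≤ (lam X).comp (M.unit X.P)

/-- Lax `T`-multiplication law (e): `(m_X)_! ∘ λ_{TX} ∘ T λ_X ≤ λ_X ∘ m_{PX}`. -/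
def LawE (M : TwoMonad Q) (lam : LamFamily M.toTwoFunctor) : Prop :=
  ∀ X : QCat Q,
    (pshf (M.mult X)).comp ((lam (M.obj X)).comp (M.map (lam X))) ≤ (lam X).comp (M.mult X.P)

def IsDistLawABC (T : TwoFunctor Q) (lam : LamFamily T) : Prop :=
  LawA T lam ∧ LawB T lam ∧ LawC T lam

/-- A (lax) distributive law of the 2-monad `M` over the presheaf 2-monad. -/
def IsDistLaw (M : TwoMonad Q) (lam : LamFamily M.toTwoFunctor) : Prop :=
  IsDistLawABC M.toTwoFunctor lam ∧ LawD M lam ∧ LawE M lam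

/-- A flat distributive law: (b) holds strictly. -/
def IsFlatDistLaw (M : TwoMonad Q) (lam : LamFamily M.toTwoFunctor) : Prop :=
  IsDistLaw M lam ∧ LawBstrict M.toTwoFunctor lam

/-- Lax `λ`-algebra: laws (f) and (g). -/
def IsLaxAlg (M : TwoMonad Q) (lam : LamFamily M.toTwoFunctor) (X : QCat Q)
    (p : QFun (M.obj X) X.P) : Prop :=
  X.y ≤ p.comp (M.unit X) ∧
  (supP X).comp ((pshf p).comp ((lam X).comp (M.map p))) ≤ p.comp (M.mult X)

/-- Lax `λ`-homomorphism: law (h). -/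
def IsLaxHom (M : TwoMonad Q) {X Y : QCat Q}
    (p : QFun (M.obj X) X.P) (q : QFun (M.obj Y) Y.P) (f : QFun X Y) : Prop :=
  (pshf f).comp p ≤ q.comp (M.map f)

/-- The type of families `T̂φ : TX ⇸ TY`, one for each `φ : X ⇸ Y`. -/
abbrev ExtFamily (T : TwoFunctor Q) : Type (u + 1) :=
  ∀ ⦃X Y : QCat Q⦄, QDist X Y → QDist (T.obj X) (T.obj Y)

/-- A lax extension of the 2-functor `T` to `Q`-Dist: conditions (1), (2), (3). -/
def IsLaxExt (T : TwoFunctor Q) (ext : ExtFamily T) : Prop :=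
  (∀ (X Y : QCat Q) (φ φ' : QDist X Y), φ ≤ φ' → ext φ ≤ ext φ') ∧
  (∀ (X Y Z : QCat Q) (φ : QDist X Y) (ψ : QDist Y Z), (ext ψ).comp (ext φ) ≤ ext (ψ.comp φ)) ∧
  (∀ (X Y : QCat Q) (f : QFun X Y),
    (T.map f).graph ≤ ext f.graph ∧ (T.map f).cograph ≤ ext f.cograph)

/-- Condition (4): `φ ∘ e_X^* ≤ e_Y^* ∘ T̂φ`. -/
def ExtLaw4 (M : TwoMonad Q) (ext : ExtFamily M.toTwoFunctor) : Prop :=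
  ∀ (X Y : QCat Q) (φ : QDist X Y),
    φ.comp (M.unit X).cograph ≤ ((M.unit Y).cograph).comp (ext φ)

/-- Condition (5): `T̂T̂φ ∘ m_X^* ≤ m_Y^* ∘ T̂φ`. -/
def ExtLaw5 (M : TwoMonad Q) (ext : ExtFamily M.toTwoFunctor) : Prop :=
  ∀ (X Y : QCat Q) (φ : QDist X Y),
    (ext (ext φ)).comp (M.mult X).cograph ≤ ((M.mult Y).cograph).comp (ext φ)

/-- A lax extension of the 2-monad `M` to `Q`-Dist. -/
def IsMonadLaxExt (M : TwoMonad Q) (ext : ExtFamily M.toTwoFunctor) : Prop :=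
  IsLaxExt M.toTwoFunctor ext ∧ ExtLaw4 M ext ∧ ExtLaw5 M ext

/-- Flatness of a lax extension: `T̂ 1_X^* = 1_{TX}^*`. -/
def FlatExt (T : TwoFunctor Q) (ext : ExtFamily T) : Prop :=
  ∀ X : QCat Q, ext X.homDist = (T.obj X).homDist

/-- From a lax distributive law to a lax extension: `←(T̂φ) = λ_X ∘ T(←φ)`. -/
def PhiExt (T : TwoFunctor Q) (lam : LamFamily T) : ExtFamily T :=
  fun X Y φ => QFun.untranspose ((lam X).comp (T.map φ.transpose))

/-- From a lax extension to a lax distributive law: `λ_X = ←(T̂((y_X)_*))`. -/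
def PsiLam (T : TwoFunctor Q) (ext : ExtFamily T) : LamFamily T :=
  fun X => (ext X.y.graph).transpose

/-- The canonical lax extension `T̂φ = (T ←φ)^* ∘ (T y_X)_*`. -/
def hatExt (T : TwoFunctor Q) : ExtFamily T :=
  fun X Y φ => ((T.map φ.transpose).cograph).comp (T.map X.y).graph

/-- `λ_X = y_{PX} ∘ sup_{PX}`: the flat distributive law of `P` over itself. -/
def lamP (X : QCat Q) : QFun X.P.P X.P.P := (QCat.y X.P).comp (supP X)

/-- `λ†_X = ((y_X)_†)^! ∘ y_{P†PX}`: the strict distributive law of `P†` over `P`. -/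
def lamd (X : QCat Q) : QFun X.P.Pd X.Pd.P := (pshb (cpsf X.y)).comp (QCat.y X.P.Pd)

/-- `Λ_X = y_{PP†X} ∘ ((y_X)_†)^!`: the flat distributive law of `P P†` over `P`. -/
def LamPPd (X : QCat Q) : QFun X.P.Pd.P X.Pd.P.P := (QCat.y X.Pd.P).comp (pshb (cpsf X.y))

/-- The multiplication `S_X = s_{P†X} ∘ (y†_{PP†X})^!` of the double presheaf 2-monad. -/
def Smult (X : QCat Q) : QFun X.Pd.P.Pd.P X.Pd.P := (supP X.Pd).comp (pshb (QCat.yd X.Pd.P))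

/-- `Λ†_X = (y_X^!)^{†!} ∘ y_{P†PPX}`: the flat distributive law of `P† P` over `P`. -/
def LamPdP (X : QCat Q) : QFun X.P.P.Pd X.P.Pd.P :=
  (pshf (cpsf (supP X))).comp (QCat.y X.P.P.Pd)

/-- The multiplication `S†_X = s†_{PX} ∘ (y_{P†PX})^†` of the double copresheaf
2-monad. -/
def Sdmult (X : QCat Q) : QFun X.P.Pd.P.Pd X.P.Pd := (infPd X.P).comp (cpsb (QCat.y X.P.Pd))

/-- Pointwise infimum of a family of `Q`-functors into a presheaf `Q`-category. -/
def QFun.iInfP {ι : Type u} {Z X : QCat Q} (F : ι → QFun Z X.P) : QFun Z X.P where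
  app s z := ⟨fun p x => ⨅ i, ((F i).app s z).1 p x, by
    intro p q x x'
    refine le_iInf fun i => ?_
    exact le_trans
      (Quantaloid.comp_le_comp (iInf_le (fun i => ((F i).app s z).1 q x') i) le_rfl)
      (((F i).app s z).2 p q x x')⟩
  mono := by
    intro s s' z z'
    refine le_iInf fun p => le_iInf fun x => Quantaloid.le_lda.mp ?_
    refine le_iInf fun i => ?_
    have h1 : Q.comp (Z.hom s s' z z') (⨅ j, ((F j).app s z).1 p x)
        ≤ Q.comp (Z.hom s s' z z') (((F i).app s z).1 p x) :=
      Quantaloid.comp_le_comp le_rfl (iInf_le _ i)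
    have h2 : Q.comp (Z.hom s s' z z') (((F i).app s z).1 p x)
        ≤ ((F i).app s' z').1 p x :=
      Quantaloid.le_lda.mpr
        (le_trans ((F i).mono s s' z z') (le_trans (iInf_le _ p) (iInf_le _ x)))
    exact le_trans h1 h2

/-!
Write `⟨δ, σ⟩ := σ ∘ δ` for the composite of a copresheaf `δ` and a presheaf `σ` on `X`.
Then `λ†_X τ δ = ⋀_σ τ σ ↘ ⟨δ, σ⟩`, i.e. `u ≤ λ†_X τ δ` iff `τ σ ∘ u ≤ ⟨δ, σ⟩` for every `σ`.
Each law is checked pointwise. Its left side collapses, by the Yoneda lemma in `P P† X`, to a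
single value of `λ†`: `λ†_X τ (f^† ε)` in (a), `λ†_{PX} T ((y_X)_† δ)` in (c),
`λ†_{P†X} ((λ†_X)_† W) (y†δ)` in (e). Its right side is identified with that value by comparing
the characterisations of `u ≤ λ†`, using the identities `⟨ε, f_! σ⟩ = ⟨f^† ε, σ⟩`,
`⟨δ, f^! ρ⟩ = ⟨f_† δ, ρ⟩`, `⟨y†x, σ⟩ = σ x` and `⟨δ, y x⟩ = δ x`.
-/

section StrictDistributiveLaw

open Quantaloid

theorem QFun.ext {Z W : QCat Q} {f g : QFun Z W} (h : f.app = g.app) : f = g := by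
  cases f; cases g; cases h; rfl

theorem QFun.ext_P {Z W : QCat Q} {f g : QFun Z W.P}
    (h : ∀ s (z : Z.el s) p (x : W.el p), (f.app s z).1 p x = (g.app s z).1 p x) : f = g :=
  QFun.ext <| funext fun s => funext fun z => Subtype.ext <| funext fun p => funext (h s z p)

theorem QFun.comp_app {X Y Z : QCat Q} (g : QFun Y Z) (f : QFun X Y) {p : Q.Obj} (x : X.el p) :
    (g.comp f).app p x = g.app p (f.app p x) := rfl

section Yoneda

variable {Z : QCat Q} {p q s s' t : Q.Obj}

theorem QCat.le_hom_self_comp (z : Z.el s) (u : Q.Hom t s) : u ≤ Q.comp (Z.hom s s z z) u :=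
  calc u = Q.comp (Q.idm s) u := (Q.idm_comp u).symm
    _ ≤ _ := comp_le_comp (Z.refl s z) le_rfl

theorem QCat.le_comp_hom_self (z : Z.el s) (u : Q.Hom s t) : u ≤ Q.comp u (Z.hom s s z z) :=
  calc u = Q.comp u (Q.idm s) := (Q.comp_idm u).symm
    _ ≤ _ := comp_le_comp le_rfl (Z.refl s z)

theorem QCat.le_P_hom_iff {σ : Z.P.el s} {σ' : Z.P.el s'} {u : Q.Hom s s'} :
    u ≤ Z.P.hom s s' σ σ' ↔ ∀ p (x : Z.el p), Q.comp u (σ.1 p x) ≤ σ'.1 p x := by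
  simp only [QCat.P, le_iInf_iff, ← le_lda]

theorem QCat.le_Pd_hom_iff {τ : Z.Pd.el s} {τ' : Z.Pd.el s'} {u : Q.Hom s s'} :
    u ≤ Z.Pd.hom s s' τ τ' ↔ ∀ q (x : Z.el q), Q.comp (τ'.1 q x) u ≤ τ.1 q x := by
  simp only [QCat.Pd, le_iInf_iff, ← le_rda]

theorem QCat.P_hom_comp_le (σ : Z.P.el s) (σ' : Z.P.el s') (x : Z.el p) :
    Q.comp (Z.P.hom s s' σ σ') (σ.1 p x) ≤ σ'.1 p x :=
  QCat.le_P_hom_iff.mp le_rfl p x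

theorem QCat.comp_Pd_hom_le (τ : Z.Pd.el s) (τ' : Z.Pd.el s') (x : Z.el q) :
    Q.comp (τ'.1 q x) (Z.Pd.hom s s' τ τ') ≤ τ.1 q x :=
  QCat.le_Pd_hom_iff.mp le_rfl q x

theorem QCat.iSup_P_comp_hom (σ : Z.P.el s) (x : Z.el p) :
    ⨆ q, ⨆ x' : Z.el q, Q.comp (σ.1 q x') (Z.hom p q x x') = σ.1 p x :=
  le_antisymm (iSup₂_le fun q x' => σ.2 p q x x')
    ((Z.le_comp_hom_self x _).trans (le_iSup₂_of_le p x le_rfl))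

theorem QCat.iSup_hom_comp_Pd (τ : Z.Pd.el s) (x : Z.el q) :
    ⨆ p, ⨆ x' : Z.el p, Q.comp (Z.hom p q x' x) (τ.1 p x') = τ.1 q x :=
  le_antisymm (iSup₂_le fun p x' => τ.2 p q x' x)
    ((Z.le_hom_self_comp x _).trans (le_iSup₂_of_le q x le_rfl))

theorem QCat.forall_hom_comp_le_Pd_iff (τ : Z.Pd.el s) (x : Z.el p) (v : Q.Hom s p) :
    (∀ q (x' : Z.el q), Q.comp (Z.hom p q x x') v ≤ τ.1 q x') ↔ v ≤ τ.1 p x :=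
  ⟨fun h => (Z.le_hom_self_comp x v).trans (h p x),
    fun h q x' => (comp_le_comp le_rfl h).trans (τ.2 p q x x')⟩

theorem QCat.P_hom_y (x : Z.el p) (σ : Z.P.el q) : Z.P.hom p q (Z.y.app p x) σ = σ.1 p x :=
  le_antisymm ((Z.le_comp_hom_self x _).trans (QCat.P_hom_comp_le (Z.y.app p x) σ x))
    (QCat.le_P_hom_iff.mpr fun _ x' => σ.2 _ p x' x)

theorem QCat.Pd_hom_yd (τ : Z.Pd.el s) (x : Z.el p) : Z.Pd.hom s p τ (Z.yd.app p x) = τ.1 p x :=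
  le_antisymm ((Z.le_hom_self_comp x _).trans (QCat.comp_Pd_hom_le τ (Z.yd.app p x) x))
    (QCat.le_Pd_hom_iff.mpr fun _ x' => τ.2 p _ x x')

theorem QCat.iSup_P_hom_comp (σ : Z.P.el s) (x : Z.el p) :
    ⨆ q, ⨆ ρ : Z.P.el q, Q.comp (Z.P.hom q s ρ σ) (ρ.1 p x) = σ.1 p x :=
  le_antisymm (iSup₂_le fun _ ρ => QCat.P_hom_comp_le ρ σ x)
    ((Z.P.le_hom_self_comp σ _).trans (le_iSup₂_of_le s σ le_rfl))

end Yoneda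

section Functors

variable {X Y Z : QCat Q} {p q r s : Q.Obj}

theorem pshf_app (f : QFun X Y) (σ : X.P.el s) (y : Y.el p) :
    ((pshf f).app s σ).1 p y = ⨆ q, ⨆ x : X.el q, Q.comp (σ.1 q x) (Y.hom p q y (f.app q x)) :=
  rfl

theorem pshb_app (f : QFun X Y) (ρ : Y.P.el s) (x : X.el p) :
    ((pshb f).app s ρ).1 p x = ⨆ q, ⨆ y : Y.el q, Q.comp (ρ.1 q y) (Y.hom p q (f.app p x) y) :=
  rfl

theorem cpsf_app (f : QFun X Y) (δ : X.Pd.el s) (y : Y.el q) :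
    ((cpsf f).app s δ).1 q y = ⨆ r, ⨆ x : X.el r, Q.comp (Y.hom r q (f.app r x) y) (δ.1 r x) :=
  rfl

theorem cpsb_app (f : QFun X Y) (ε : Y.Pd.el s) (x : X.el r) :
    ((cpsb f).app s ε).1 r x = ε.1 r (f.app r x) :=
  Y.iSup_hom_comp_Pd ε (f.app r x)

theorem supP_app (A : Z.P.P.el s) (x : Z.el p) :
    ((supP Z).app s A).1 p x = ⨆ r, ⨆ σ : Z.P.el r, Q.comp (A.1 r σ) (σ.1 p x) :=
  iSup_congr fun _ => iSup_congr fun σ => by rw [← QCat.P_hom_y x σ]; rfl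

theorem infPd_app (W : Z.Pd.Pd.el s) (x : Z.el q) :
    ((infPd Z).app s W).1 q x = ⨆ r, ⨆ δ : Z.Pd.el r, Q.comp (δ.1 q x) (W.1 r δ) :=
  iSup_congr fun _ => iSup_congr fun δ => by rw [← QCat.Pd_hom_yd δ x]; rfl

theorem supP_pshf_app (g : QFun Z Y.P) (A : Z.P.el s) (y : Y.el p) :
    ((supP Y).app s ((pshf g).app s A)).1 p y
      = ⨆ r, ⨆ z : Z.el r, Q.comp (A.1 r z) ((g.app r z).1 p y) := by
  simp only [supP_app, pshf_app, iSup_comp, Q.comp_assoc]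
  rw [iSup₂_comm]
  simp only [← comp_iSup, QCat.iSup_P_hom_comp]

end Functors

section Pairing

variable {X Y Z : QCat Q} {p q : Q.Obj}

/-- The composite `σ ∘ δ : {p} ⇸ {q}` of a copresheaf `δ : {p} ⇸ Z` and a presheaf
`σ : Z ⇸ {q}`. -/
def pairing (δ : Z.Pd.el p) (σ : Z.P.el q) : Q.Hom p q :=
  ⨆ r, ⨆ x : Z.el r, Q.comp (σ.1 r x) (δ.1 r x)

theorem pairing_y (δ : Z.Pd.el p) (x : Z.el q) : pairing δ (Z.y.app q x) = δ.1 q x :=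
  Z.iSup_hom_comp_Pd δ x

theorem pairing_yd (x : Z.el p) (σ : Z.P.el q) : pairing (Z.yd.app p x) σ = σ.1 p x :=
  Z.iSup_P_comp_hom σ x

theorem cpsf_y_app (δ : Z.Pd.el p) (σ : Z.P.el q) : ((cpsf Z.y).app p δ).1 q σ = pairing δ σ :=
  iSup_congr fun _ => iSup_congr fun x => by rw [← QCat.P_hom_y x σ]; rfl

theorem forall_P_hom_comp_le_pairing_iff (δ : Z.Pd.el p) (σ : Z.P.el q) (v : Q.Hom p q) :
    (∀ r (ρ : Z.P.el r), Q.comp (Z.P.hom q r σ ρ) v ≤ pairing δ ρ) ↔ v ≤ pairing δ σ := by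
  simp only [← cpsf_y_app]
  exact Z.P.forall_hom_comp_le_Pd_iff _ σ v

theorem pairing_pshf (f : QFun X Y) (ε : Y.Pd.el p) (σ : X.P.el q) :
    pairing ε ((pshf f).app q σ) = pairing ((cpsb f).app p ε) σ := by
  simp only [pairing, pshf_app, cpsb, QDist.bwd, QFun.cograph, iSup_comp, comp_iSup,
    Q.comp_assoc]
  exact iSup₂_comm _

theorem pairing_pshb (f : QFun X Y) (δ : X.Pd.el p) (ρ : Y.P.el q) :
    pairing δ ((pshb f).app q ρ) = pairing ((cpsf f).app p δ) ρ := by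
  simp only [pairing, pshb_app, cpsf_app, iSup_comp, comp_iSup, Q.comp_assoc]
  exact iSup₂_comm _

theorem Pd_hom_cpsf (f : QFun X Y) (ε : Y.Pd.el p) (δ : X.Pd.el q) :
    Y.Pd.hom p q ε ((cpsf f).app q δ) = X.Pd.hom p q ((cpsb f).app p ε) δ := by
  refine eq_of_forall_le_iff fun u => ?_
  simp only [QCat.le_Pd_hom_iff, cpsf_app, cpsb_app, iSup_comp, iSup_le_iff, Q.comp_assoc]
  refine ⟨fun h r x => ?_, fun h q y r x => ?_⟩
  · exact (Y.forall_hom_comp_le_Pd_iff ε (f.app r x) _).mp fun q y => h q y r x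
  · exact (Y.forall_hom_comp_le_Pd_iff ε (f.app r x) _).mpr (h r x) q y

theorem Pd_hom_infPd (δ : Z.Pd.el p) (D : Z.Pd.Pd.el q) :
    Z.Pd.hom p q δ ((infPd Z).app q D) = Z.Pd.Pd.hom p q ((QCat.yd Z.Pd).app p δ) D := by
  refine eq_of_forall_le_iff fun u => ?_
  simp only [QCat.le_Pd_hom_iff, infPd_app, iSup_comp, iSup_le_iff, Q.comp_assoc]
  exact ⟨fun h r δ' => QCat.le_Pd_hom_iff.mpr fun q x => h q x r δ',
    fun h q x r δ' => QCat.le_Pd_hom_iff.mp (h r δ') q x⟩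

end Pairing

section Lamd

variable {X Y W Z : QCat Q} {p s : Q.Obj}

theorem lamd_app (τ : Z.P.Pd.el s) (δ : Z.Pd.el p) :
    ((lamd Z).app s τ).1 p δ = Z.P.Pd.hom p s ((cpsf Z.y).app p δ) τ :=
  Z.P.Pd.iSup_P_comp_hom (Z.P.Pd.y.app s τ) ((cpsf Z.y).app p δ)

theorem lamd_eq_transpose_graph (Z : QCat Q) : lamd Z = ((cpsf Z.y).graph).transpose :=
  QFun.ext_P fun _ τ _ δ => lamd_app τ δ

theorem le_lamd_iff {τ : Z.P.Pd.el s} {δ : Z.Pd.el p} {u : Q.Hom p s} :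
    u ≤ ((lamd Z).app s τ).1 p δ ↔ ∀ q (σ : Z.P.el q), Q.comp (τ.1 q σ) u ≤ pairing δ σ := by
  simp only [lamd_app, QCat.le_Pd_hom_iff, cpsf_y_app]

theorem le_lamd_cpsf_iff (g : QFun W Z.P) {τ : W.Pd.el s} {ε : Z.Pd.el p} {u : Q.Hom p s} :
    u ≤ ((lamd Z).app s ((cpsf g).app s τ)).1 p ε
      ↔ ∀ r (w : W.el r), Q.comp (τ.1 r w) u ≤ pairing ε (g.app r w) := by
  simp only [le_lamd_iff, cpsf_app, iSup_comp, iSup_le_iff, Q.comp_assoc]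
  refine ⟨fun h r w => ?_, fun h q ρ r w => ?_⟩
  · exact (forall_P_hom_comp_le_pairing_iff ε (g.app r w) _).mp fun q ρ => h q ρ r w
  · exact (forall_P_hom_comp_le_pairing_iff ε (g.app r w) _).mpr (h r w) q ρ

theorem le_lamd_infPd_iff {V : Z.P.Pd.Pd.el s} {δ : Z.Pd.el p} {u : Q.Hom p s} :
    u ≤ ((lamd Z).app s ((infPd Z.P).app s V)).1 p δ
      ↔ ∀ r (τ : Z.P.Pd.el r), Q.comp (V.1 r τ) u ≤ ((lamd Z).app r τ).1 p δ := by
  simp only [le_lamd_iff, infPd_app, iSup_comp, iSup_le_iff, Q.comp_assoc]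
  exact ⟨fun h r τ q σ => h q σ r τ, fun h q σ r τ => h r τ q σ⟩

theorem lamd_yd_app (σ : Z.P.el s) (δ : Z.Pd.el p) :
    ((lamd Z).app s ((QCat.yd Z.P).app s σ)).1 p δ = pairing δ σ :=
  eq_of_forall_le_iff fun u => le_lamd_iff.trans (forall_P_hom_comp_le_pairing_iff δ σ u)

theorem pshf_cpsf_comp_lamd (f : QFun X Y) :
    (pshf (cpsf f)).comp (lamd X) = (lamd Y).comp (cpsf (pshf f)) := by
  refine QFun.ext_P fun s τ p ε => ?_
  have lhs : (((pshf (cpsf f)).comp (lamd X)).app s τ).1 p ε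
      = ((lamd X).app s τ).1 p ((cpsb f).app p ε) := by
    simp only [QFun.comp_app, pshf_app, Pd_hom_cpsf]
    exact QCat.iSup_P_comp_hom _ _
  refine lhs.trans (eq_of_forall_le_iff fun u => ?_)
  rw [QFun.comp_app, le_lamd_cpsf_iff, le_lamd_iff]
  simp only [pairing_pshf]

theorem lamd_comp_cpsf_y (Z : QCat Q) : (lamd Z).comp (cpsf Z.y) = QCat.y Z.Pd := by
  refine QFun.ext_P fun s δ₀ p δ => eq_of_forall_le_iff fun u => ?_
  simp only [QFun.comp_app, le_lamd_cpsf_iff, pairing_y]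
  exact QCat.le_Pd_hom_iff.symm

theorem supP_comp_pshf_lamd_comp_lamd (Z : QCat Q) :
    (supP Z.Pd).comp ((pshf (lamd Z)).comp (lamd Z.P)) = (lamd Z).comp (cpsf (supP Z)) := by
  refine QFun.ext_P fun s T p δ => ?_
  have lhs : (((supP Z.Pd).comp ((pshf (lamd Z)).comp (lamd Z.P))).app s T).1 p δ
      = ((lamd Z.P).app s T).1 p ((cpsf Z.y).app p δ) := by
    simp only [QFun.comp_app, supP_pshf_app, lamd_app (Z := Z)]
    exact QCat.iSup_P_comp_hom _ _
  refine lhs.trans (eq_of_forall_le_iff fun u => ?_)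
  rw [QFun.comp_app, le_lamd_cpsf_iff, le_lamd_iff]
  simp only [supP, pairing_pshb]

theorem pshf_yd (Z : QCat Q) : pshf Z.yd = (lamd Z).comp (QCat.yd Z.P) :=
  QFun.ext_P fun _ σ _ δ => by
    rw [QFun.comp_app, lamd_yd_app, pshf_app]
    simp only [QCat.Pd_hom_yd]
    rfl

theorem pshf_infPd_comp_lamd_comp_cpsf_lamd (Z : QCat Q) :
    (pshf (infPd Z)).comp ((lamd Z.Pd).comp (cpsf (lamd Z))) = (lamd Z).comp (infPd Z.P) := by
  refine QFun.ext_P fun s V p δ => ?_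
  have lhs : (((pshf (infPd Z)).comp ((lamd Z.Pd).comp (cpsf (lamd Z)))).app s V).1 p δ
      = ((lamd Z.Pd).app s ((cpsf (lamd Z)).app s V)).1 p ((QCat.yd Z.Pd).app p δ) := by
    simp only [QFun.comp_app, pshf_app, Pd_hom_infPd]
    exact QCat.iSup_P_comp_hom _ _
  refine lhs.trans (eq_of_forall_le_iff fun u => ?_)
  simp only [QFun.comp_app, le_lamd_cpsf_iff, le_lamd_infPd_iff, pairing_yd]

end Lamd

end StrictDistributiveLaw

/-- the copresheaf 2-monad `𝔓† = (P†, s†, y†)` distributes strictly over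
the presheaf 2-monad by `λ†_X = ←(((y_X)_†)_*) = ((y_X)_†)^! ∘ y_{P†PX} : P†PX → PP†X`
(here `T = P†`, `Tf = f_†`, `e = y†`, `m = s†`): all five laws (a)–(e) hold with
equality. -/
theorem statement8 (Q : Quantaloid.{u}) :
    -- the two descriptions of λ† agree
    (∀ X : QCat Q, lamd X = ((cpsf X.y).graph).transpose) ∧
    -- (a) strictly: (Tf)_! ∘ λ†_X = λ†_Y ∘ T(f_!)
    (∀ (X Y : QCat Q) (f : QFun X Y),
      (pshf (cpsf f)).comp (lamd X) = (lamd Y).comp (cpsf (pshf f))) ∧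
    -- (b) strictly: λ†_X ∘ T y_X = y_{TX}
    (∀ X : QCat Q, (lamd X).comp (cpsf X.y) = QCat.y X.Pd) ∧
    -- (c) strictly: s_{TX} ∘ (λ†_X)_! ∘ λ†_{PX} = λ†_X ∘ T s_X
    (∀ X : QCat Q,
      (supP X.Pd).comp ((pshf (lamd X)).comp (lamd X.P)) = (lamd X).comp (cpsf (supP X))) ∧
    -- (d) strictly: (e_X)_! = λ†_X ∘ e_{PX}
    (∀ X : QCat Q, pshf X.yd = (lamd X).comp (QCat.yd X.P)) ∧
    -- (e) strictly: (m_X)_! ∘ λ†_{TX} ∘ T λ†_X = λ†_X ∘ m_{PX}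
    (∀ X : QCat Q,
      (pshf (infPd X)).comp ((lamd X.Pd).comp (cpsf (lamd X))) = (lamd X).comp (infPd X.P)) :=
  ⟨lamd_eq_transpose_graph, fun _ _ => pshf_cpsf_comp_lamd, lamd_comp_cpsf_y,
    supP_comp_pshf_lamd_comp_lamd, pshf_yd, pshf_infPd_comp_lamd_comp_cpsf_lamd⟩

end QT
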